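/- Let h ∈ Sp(n,1), let g = diag(λ₁, …, λₙ, λ_{n+1}) with each |λᵢ| = 1, and set δ = max_{1≤i≤n} sup{ |u λᵢ u⁻¹ − w λ_{n+1} w⁻¹|² : u, w ∈ ℍ \ {0} }. Define h₀ = h and h_{k+1} = h_k g h_k⁻¹, with block form h_k = [[A^{(k)}, α^{(k)}],[β^{(k)}, a^{(k)}]]. Suppose |a^{(0)}|²·δ < 1 and β^{(k)} ≠ 0 for every k ≥ 0. Then |a^{(k+1)}| < |a^{(k)}| for every k (so the matrices h_k are pairwise distinct), and there exist a strictly increasing sequence of indices k_t and a block-diagonal matrix h_∞ = diag(A_∞, a_∞) ∈ Sp(n,1) such that h_{k_t} → h_∞ entrywise. In particular, the subgroup of Sp(n,1) generated by g and h is not discrete. -/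

import Mathlib

open Quaternion Matrix Filter

/-- The Hermitian form `J = diag(1,…,1,−1)` on `ℍ^{n,1}`, as an `(n+1)×(n+1)`
quaternionic matrix indexed by `Fin n ⊕ Unit`. -/
noncomputable def Jm (n : ℕ) : Matrix (Fin n ⊕ Unit) (Fin n ⊕ Unit) ℍ[ℝ] :=
  Matrix.fromBlocks 1 0 0 (-1)

/-- `Sp(n,1)`: the quaternionic matrices `g` with `g* J g = J`. -/
noncomputable def Sp (n : ℕ) : Set (Matrix (Fin n ⊕ Unit) (Fin n ⊕ Unit) ℍ[ℝ]) :=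
  {g | gᴴ * Jm n * g = Jm n}

/-- The subgroup of `Sp(n,1)` generated by `g` and `h`, realized as the monoid generated
by `g`, `h` and their inverses `J g* J`, `J h* J`. -/
noncomputable def genGrp (n : ℕ) (g h : Matrix (Fin n ⊕ Unit) (Fin n ⊕ Unit) ℍ[ℝ]) :
    Submonoid (Matrix (Fin n ⊕ Unit) (Fin n ⊕ Unit) ℍ[ℝ]) :=
  Submonoid.closure {g, h, Jm n * gᴴ * Jm n, Jm n * hᴴ * Jm n}

/-!
Write `a = a_k`, `β = β^{(k)}` and `e_k = |a_k|² − 1 = Σ |β_i|²` (the last-row relation of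
`h_k ∈ Sp(n,1)`). The corner of `h_{k+1} = h_k g J h_k* J` is `a λ_{n+1} ā − Σ β_i λ_i β̄_i`.
Since `x y x̄ = |x|² · x y x⁻¹`, this is `p + Σ |β_i|² (p − q_i)` with the unit quaternions
`p = a λ_{n+1} a⁻¹` and `q_i = β_i λ_i β_i⁻¹`, and `|p − q_i|² ≤ δ`. Expanding the square gives
`e_{k+1} ≤ e_k (1 + e_k) δ`, so as long as `|a_0|² δ < 1` the `e_k` decrease geometrically,
and strictly because `β^{(k)} ≠ 0` makes `e_k > 0`.
Hence the `h_k` are distinct, their entries stay bounded by `|a_0|`, and a subsequence converges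
to some `h_∞ ∈ Sp(n,1)` whose corner has norm one, which forces `h_∞` to be block diagonal.
The quotients `h_{k_{t+1}} h_{k_t}⁻¹` are then non-trivial elements of `⟨g, h⟩` tending to `1`.
-/

theorem Quaternion.coe_sum {ι : Type*} (s : Finset ι) (f : ι → ℝ) :
    ((∑ i ∈ s, f i : ℝ) : ℍ[ℝ]) = ∑ i ∈ s, (f i : ℍ[ℝ]) :=
  map_sum (algebraMap ℝ ℍ[ℝ]) f s

theorem Quaternion.mul_mul_star_eq_norm_sq_smul (x y : ℍ[ℝ]) :
    x * y * star x = ‖x‖ ^ 2 • (x * y * x⁻¹) := by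
  rcases eq_or_ne x 0 with rfl | hx
  · simp
  rw [inv_def, mul_smul_comm, smul_smul, normSq_eq_norm_mul_self, ← sq,
    mul_inv_cancel₀ (by positivity), one_smul]

theorem Quaternion.norm_mul_mul_inv (y : ℍ[ℝ]) {x : ℍ[ℝ]} (hx : x ≠ 0) :
    ‖x * y * x⁻¹‖ = ‖y‖ := by
  rw [norm_mul, norm_mul, norm_inv, mul_comm ‖x‖, mul_assoc,
    mul_inv_cancel₀ (norm_ne_zero_iff.mpr hx), mul_one]

theorem norm_add_sum_smul_sub_sq_le {E ι : Type*} [NormedAddCommGroup E] [InnerProductSpace ℝ E]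
    (s : Finset ι) {w : ι → ℝ} {p : E} {q : ι → E} {δ : ℝ} (hp : ‖p‖ = 1)
    (hw : ∀ i ∈ s, 0 ≤ w i) (hq : ∀ i ∈ s, w i ≠ 0 → ‖q i‖ = 1 ∧ ‖p - q i‖ ^ 2 ≤ δ)
    (hδ : 0 ≤ δ) :
    ‖p + ∑ i ∈ s, w i • (p - q i)‖ ^ 2 ≤ 1 + (∑ i ∈ s, w i) * (1 + ∑ i ∈ s, w i) * δ := by
  have hterm : ∀ i ∈ s, 2 * inner ℝ p (w i • (p - q i)) ≤ w i * δ ∧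
      ‖w i • (p - q i)‖ ≤ w i * √δ := by
    intro i hi
    rcases eq_or_ne (w i) 0 with h0 | h0
    · simp [h0]
    obtain ⟨hqi, hpq⟩ := hq i hi h0
    have hpar : 2 * inner ℝ p (p - q i) = ‖p - q i‖ ^ 2 := by
      have := norm_sub_sq_real p (p - q i)
      rw [sub_sub_cancel, hqi, hp] at this
      linarith
    rw [real_inner_smul_right, norm_smul, Real.norm_of_nonneg (hw i hi)]
    constructor
    · nlinarith [hw i hi]
    · exact mul_le_mul_of_nonneg_left (Real.le_sqrt_of_sq_le hpq) (hw i hi)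
  set S := ∑ i ∈ s, w i
  set v := ∑ i ∈ s, w i • (p - q i)
  have hinner : 2 * inner ℝ p v ≤ S * δ := by
    rw [inner_sum, Finset.mul_sum, Finset.sum_mul]
    exact Finset.sum_le_sum fun i hi => (hterm i hi).1
  have hv : ‖v‖ ≤ S * √δ := by
    rw [Finset.sum_mul]
    exact (norm_sum_le _ _).trans (Finset.sum_le_sum fun i hi => (hterm i hi).2)
  have hS : 0 ≤ S := Finset.sum_nonneg hw
  have hv2 : ‖v‖ ^ 2 ≤ S ^ 2 * δ := by
    calc ‖v‖ ^ 2 ≤ (S * √δ) ^ 2 := pow_le_pow_left₀ (norm_nonneg v) hv 2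
      _ = S ^ 2 * δ := by rw [mul_pow, Real.sq_sqrt hδ]
  rw [norm_add_sq_real, hp]
  nlinarith

theorem Quaternion.norm_sq_mul_mul_star_sub_sum_le {ι : Type*} [Fintype ι] (a μ : ℍ[ℝ])
    (b lam : ι → ℍ[ℝ]) {δ : ℝ} (hμ : ‖μ‖ = 1) (hlam : ∀ i, ‖lam i‖ = 1)
    (hb : ∑ i, ‖b i‖ ^ 2 = ‖a‖ ^ 2 - 1)
    (hδ : ∀ i u w, u ≠ 0 → w ≠ 0 → ‖u * lam i * u⁻¹ - w * μ * w⁻¹‖ ^ 2 ≤ δ) (hδ0 : 0 ≤ δ) :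
    ‖a * μ * star a - ∑ i, b i * lam i * star (b i)‖ ^ 2 ≤ 1 + (‖a‖ ^ 2 - 1) * ‖a‖ ^ 2 * δ := by
  have ha : a ≠ 0 := by
    rintro rfl
    have := Finset.sum_nonneg fun i (_ : i ∈ Finset.univ) => sq_nonneg ‖b i‖
    simp only [norm_zero] at hb
    linarith
  have hdecomp : a * μ * star a - ∑ i, b i * lam i * star (b i) =
      a * μ * a⁻¹ + ∑ i, ‖b i‖ ^ 2 • (a * μ * a⁻¹ - b i * lam i * (b i)⁻¹) := by
    simp only [mul_mul_star_eq_norm_sq_smul, smul_sub, Finset.sum_sub_distrib, ← Finset.sum_smul,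
      hb]
    rw [sub_smul, one_smul]
    abel
  rw [hdecomp]
  have := norm_add_sum_smul_sub_sq_le Finset.univ (w := fun i => ‖b i‖ ^ 2)
    (p := a * μ * a⁻¹) (q := fun i => b i * lam i * (b i)⁻¹) (δ := δ)
    (by rw [norm_mul_mul_inv _ ha, hμ]) (fun i _ => sq_nonneg _) ?_ hδ0
  · simpa only [hb, add_sub_cancel] using this
  intro i _ hi
  have hbi : b i ≠ 0 := by simpa using hi
  exact ⟨by rw [norm_mul_mul_inv _ hbi, hlam], by rw [norm_sub_rev]; exact hδ i _ _ hbi ha⟩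

theorem norm_conj_sub_conj_sq_le_sSup {ι : Type*} {lam : ι → ℍ[ℝ]} {μ : ℍ[ℝ]}
    (hlam : ∀ i, ‖lam i‖ = 1) (hμ : ‖μ‖ = 1) (i : ι) {u w : ℍ[ℝ]} (hu : u ≠ 0) (hw : w ≠ 0) :
    ‖u * lam i * u⁻¹ - w * μ * w⁻¹‖ ^ 2 ≤
      sSup {r : ℝ | ∃ i, ∃ u w : ℍ[ℝ], u ≠ 0 ∧ w ≠ 0 ∧
        r = ‖u * lam i * u⁻¹ - w * μ * w⁻¹‖ ^ 2} := by
  refine le_csSup ⟨4, ?_⟩ ⟨i, u, w, hu, hw, rfl⟩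
  rintro _ ⟨i, u, w, hu, hw, rfl⟩
  have : ‖u * lam i * u⁻¹ - w * μ * w⁻¹‖ ≤ 2 := by
    calc _ ≤ ‖u * lam i * u⁻¹‖ + ‖w * μ * w⁻¹‖ := norm_sub_le _ _
      _ = 2 := by rw [norm_mul_mul_inv _ hu, norm_mul_mul_inv _ hw, hlam, hμ]; norm_num
  nlinarith [norm_nonneg (u * lam i * u⁻¹ - w * μ * w⁻¹)]

section SubOneRecursion

variable {x : ℕ → ℝ} {δ : ℝ}

theorem le_apply_zero_of_sub_one_le (hrec : ∀ k, x (k + 1) - 1 ≤ (x k - 1) * x k * δ)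
    (hone : ∀ k, 1 ≤ x k) (hδ : 0 ≤ δ) (hsmall : x 0 * δ ≤ 1) (k : ℕ) : x k ≤ x 0 := by
  induction k with
  | zero => rfl
  | succ k ih =>
    have : (x k - 1) * x k * δ ≤ (x k - 1) * (x 0 * δ) := by
      rw [mul_assoc]; gcongr; linarith [hone k]
    nlinarith [hrec k, hone k]

theorem sub_one_succ_le_of_sub_one_le (hrec : ∀ k, x (k + 1) - 1 ≤ (x k - 1) * x k * δ)
    (hone : ∀ k, 1 ≤ x k) (hδ : 0 ≤ δ) (hsmall : x 0 * δ ≤ 1) (k : ℕ) :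
    x (k + 1) - 1 ≤ x 0 * δ * (x k - 1) := by
  have := le_apply_zero_of_sub_one_le hrec hone hδ hsmall k
  calc x (k + 1) - 1 ≤ (x k - 1) * x k * δ := hrec k
    _ ≤ (x k - 1) * x 0 * δ := by gcongr; linarith [hone k]
    _ = x 0 * δ * (x k - 1) := by ring

theorem succ_lt_of_sub_one_le (hrec : ∀ k, x (k + 1) - 1 ≤ (x k - 1) * x k * δ)
    (hone : ∀ k, 1 ≤ x k) (hδ : 0 ≤ δ) (hsmall : x 0 * δ < 1) {k : ℕ} (hk : 1 < x k) :
    x (k + 1) < x k := by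
  have := sub_one_succ_le_of_sub_one_le hrec hone hδ hsmall.le k
  nlinarith

theorem tendsto_one_of_sub_one_le (hrec : ∀ k, x (k + 1) - 1 ≤ (x k - 1) * x k * δ)
    (hone : ∀ k, 1 ≤ x k) (hδ : 0 ≤ δ) (hsmall : x 0 * δ < 1) : Tendsto x atTop (nhds 1) := by
  have hc : 0 ≤ x 0 * δ := mul_nonneg (by linarith [hone 0]) hδ
  have hgeom : ∀ k, x k - 1 ≤ (x 0 * δ) ^ k * (x 0 - 1) := by
    intro k
    induction k with
    | zero => simp
    | succ k ih =>
      calc x (k + 1) - 1 ≤ x 0 * δ * (x k - 1) :=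
            sub_one_succ_le_of_sub_one_le hrec hone hδ hsmall.le k
        _ ≤ x 0 * δ * ((x 0 * δ) ^ k * (x 0 - 1)) := by gcongr
        _ = (x 0 * δ) ^ (k + 1) * (x 0 - 1) := by ring
  have hlim : Tendsto (fun k => (x 0 * δ) ^ k * (x 0 - 1)) atTop (nhds 0) := by
    simpa using (tendsto_pow_atTop_nhds_zero_of_lt_one hc hsmall).mul_const (x 0 - 1)
  have := squeeze_zero (fun k => sub_nonneg.mpr (hone k)) hgeom hlim
  simpa using this.add_const 1

end SubOneRecursion

theorem not_discreteTopology_of_tendsto {X α : Type*} [TopologicalSpace X] {l : Filter α}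
    [l.NeBot] {s : Set X} {f : α → X} {x : X} (hx : x ∈ s) (hfs : ∀ a, f a ∈ s)
    (hf : ∀ a, f a ≠ x) (hlim : Tendsto f l (nhds x)) : ¬ DiscreteTopology s := by
  intro _
  have : Tendsto (fun a => (⟨f a, hfs a⟩ : s)) l (nhds ⟨x, hx⟩) := tendsto_subtype_rng.mpr hlim
  rw [nhds_discrete, tendsto_pure] at this
  obtain ⟨a, ha⟩ := this.exists
  exact hf a (congrArg Subtype.val ha)

variable {n : ℕ}

local notation "𝕄" n:max => Matrix (Fin n ⊕ Unit) (Fin n ⊕ Unit) ℍ[ℝ]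

theorem Jm_eq_diagonal (n : ℕ) : Jm n = diagonal (Sum.elim (fun _ => 1) (fun _ => -1)) := by
  rw [Jm, ← fromBlocks_diagonal]
  congr

theorem Jm_inl_inl (i : Fin n) : Jm n (.inl i) (.inl i) = 1 := by simp [Jm]

theorem Jm_inr_inr : Jm n (.inr ()) (.inr ()) = -1 := by simp [Jm]

@[simp]
theorem Jm_conjTranspose (n : ℕ) : (Jm n)ᴴ = Jm n := by
  simp [Jm, fromBlocks_conjTranspose]

@[simp]
theorem Jm_mul_Jm (n : ℕ) : Jm n * Jm n = 1 := by
  simp [Jm, fromBlocks_multiply]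

-- `jAdjoint` in a name stands for `X ↦ J X* J`, which inverts the elements of `Sp(n,1)`.
theorem jAdjoint_jAdjoint (X : 𝕄 n) : Jm n * (Jm n * Xᴴ * Jm n)ᴴ * Jm n = X := by
  simp [Matrix.mul_assoc, ← Matrix.mul_assoc (Jm n) (Jm n)]

theorem jAdjoint_mul (X Y : 𝕄 n) :
    Jm n * (X * Y)ᴴ * Jm n = (Jm n * Yᴴ * Jm n) * (Jm n * Xᴴ * Jm n) := by
  simp [Matrix.mul_assoc, ← Matrix.mul_assoc (Jm n) (Jm n)]

theorem continuous_jAdjoint : Continuous fun X : 𝕄 n => Jm n * Xᴴ * Jm n :=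
  (continuous_const.matrix_mul continuous_id.matrix_conjTranspose).matrix_mul continuous_const

theorem conjTranspose_mul_Jm_mul_apply_self (X : 𝕄 n) (j : Fin n ⊕ Unit) :
    (Xᴴ * Jm n * X) j j = ((∑ r, ‖X (.inl r) j‖ ^ 2 - ‖X (.inr ()) j‖ ^ 2 : ℝ) : ℍ[ℝ]) := by
  rw [Jm_eq_diagonal, mul_apply]
  simp [mul_diagonal, Fintype.sum_sum_type, Quaternion.coe_sum, star_mul_self,
    normSq_eq_norm_mul_self, sq, sub_eq_add_neg]

theorem mul_Jm_mul_conjTranspose_apply_self (X : 𝕄 n) (i : Fin n ⊕ Unit) :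
    (X * Jm n * Xᴴ) i i = ((∑ r, ‖X i (.inl r)‖ ^ 2 - ‖X i (.inr ())‖ ^ 2 : ℝ) : ℍ[ℝ]) := by
  rw [Jm_eq_diagonal, mul_apply]
  simp [mul_diagonal, Fintype.sum_sum_type, Quaternion.coe_sum, self_mul_star,
    normSq_eq_norm_mul_self, sq, sub_eq_add_neg]

theorem mul_diagonal_mul_jAdjoint_inr_inr (X : 𝕄 n) (d : Fin n ⊕ Unit → ℍ[ℝ]) :
    (X * diagonal d * (Jm n * Xᴴ * Jm n)) (.inr ()) (.inr ()) =
      X (.inr ()) (.inr ()) * d (.inr ()) * star (X (.inr ()) (.inr ())) -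
        ∑ i, X (.inr ()) (.inl i) * d (.inl i) * star (X (.inr ()) (.inl i)) := by
  rw [Jm_eq_diagonal, mul_apply]
  simp [mul_diagonal, diagonal_mul, Fintype.sum_sum_type, sub_eq_add_neg, add_comm, mul_assoc]

theorem norm_sq_le_sum_norm_sq {ι E : Type*} [Fintype ι] [SeminormedAddGroup E] (f : ι → E)
    (i : ι) : ‖f i‖ ^ 2 ≤ ∑ r, ‖f r‖ ^ 2 :=
  Finset.single_le_sum (f := fun r => ‖f r‖ ^ 2) (fun _ _ => sq_nonneg _) (Finset.mem_univ i)

namespace Sp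

variable {X Y : 𝕄 n}

theorem jAdjoint_mul_self (hX : X ∈ Sp n) : (Jm n * Xᴴ * Jm n) * X = 1 := by
  calc Jm n * Xᴴ * Jm n * X = Jm n * (Xᴴ * Jm n * X) := by simp only [Matrix.mul_assoc]
    _ = 1 := by rw [hX, Jm_mul_Jm]

theorem mul_jAdjoint (hX : X ∈ Sp n) : X * (Jm n * Xᴴ * Jm n) = 1 :=
  mul_eq_one_comm.mp (jAdjoint_mul_self hX)

theorem mul_Jm_mul_conjTranspose (hX : X ∈ Sp n) : X * Jm n * Xᴴ = Jm n := by
  simpa [Matrix.mul_assoc] using congrArg (· * Jm n) (mul_jAdjoint hX)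

theorem mul_mem (hX : X ∈ Sp n) (hY : Y ∈ Sp n) : X * Y ∈ Sp n := by
  change (X * Y)ᴴ * Jm n * (X * Y) = Jm n
  rw [conjTranspose_mul]
  calc Yᴴ * Xᴴ * Jm n * (X * Y) = Yᴴ * (Xᴴ * Jm n * X) * Y := by simp only [Matrix.mul_assoc]
    _ = Jm n := by rw [hX, hY]

theorem jAdjoint_mem (hX : X ∈ Sp n) : Jm n * Xᴴ * Jm n ∈ Sp n := by
  change _ = _
  calc (Jm n * Xᴴ * Jm n)ᴴ * Jm n * (Jm n * Xᴴ * Jm n) = Jm n * (X * Jm n * Xᴴ) * Jm n := by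
        simp [Matrix.mul_assoc]
    _ = Jm n := by rw [mul_Jm_mul_conjTranspose hX, Jm_mul_Jm, Matrix.one_mul]

theorem diagonal_mem {d : Fin n ⊕ Unit → ℍ[ℝ]} (hd : ∀ i, ‖d i‖ = 1) : diagonal d ∈ Sp n := by
  change _ = _
  have hd' : ∀ i, star (d i) * d i = 1 := fun i => by
    rw [star_mul_self, normSq_eq_norm_mul_self, hd, one_mul, coe_one]
  rw [Jm_eq_diagonal, diagonal_conjTranspose, diagonal_mul_diagonal, diagonal_mul_diagonal]
  congr 1
  funext i
  rcases i with i | i <;> simp [hd']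

theorem isClosed (n : ℕ) : IsClosed (Sp n) :=
  isClosed_eq ((continuous_id.matrix_conjTranspose.matrix_mul continuous_const).matrix_mul
    continuous_id) continuous_const

theorem sum_norm_sq_col (hX : X ∈ Sp n) (j : Fin n) :
    ∑ r, ‖X (.inl r) (.inl j)‖ ^ 2 = 1 + ‖X (.inr ()) (.inl j)‖ ^ 2 := by
  have := congrFun₂ hX (.inl j) (.inl j)
  rw [conjTranspose_mul_Jm_mul_apply_self, Jm_inl_inl, ← coe_one, coe_inj] at this
  linarith

theorem sum_norm_sq_col_last (hX : X ∈ Sp n) :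
    ∑ r, ‖X (.inl r) (.inr ())‖ ^ 2 = ‖X (.inr ()) (.inr ())‖ ^ 2 - 1 := by
  have := congrFun₂ hX (.inr ()) (.inr ())
  rw [conjTranspose_mul_Jm_mul_apply_self, Jm_inr_inr, ← coe_one, ← coe_neg, coe_inj] at this
  linarith

theorem sum_norm_sq_row_last (hX : X ∈ Sp n) :
    ∑ r, ‖X (.inr ()) (.inl r)‖ ^ 2 = ‖X (.inr ()) (.inr ())‖ ^ 2 - 1 := by
  have := congrFun₂ (mul_Jm_mul_conjTranspose hX) (.inr ()) (.inr ())
  rw [mul_Jm_mul_conjTranspose_apply_self, Jm_inr_inr, ← coe_one, ← coe_neg, coe_inj] at this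
  linarith

theorem one_le_norm_sq_inr_inr (hX : X ∈ Sp n) : 1 ≤ ‖X (.inr ()) (.inr ())‖ ^ 2 := by
  have := Finset.sum_nonneg fun r (_ : r ∈ Finset.univ) => sq_nonneg ‖X (.inr ()) (.inl r)‖
  linarith [sum_norm_sq_row_last hX]

theorem norm_apply_le (hX : X ∈ Sp n) (i j : Fin n ⊕ Unit) :
    ‖X i j‖ ≤ ‖X (.inr ()) (.inr ())‖ := by
  suffices ‖X i j‖ ^ 2 ≤ ‖X (.inr ()) (.inr ())‖ ^ 2 from
    (pow_le_pow_iff_left₀ (norm_nonneg _) (norm_nonneg _) two_ne_zero).mp this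
  rcases j with j | ⟨⟩
  · have hβ := (norm_sq_le_sum_norm_sq _ j).trans (sum_norm_sq_row_last hX).le
    rcases i with i | ⟨⟩
    · linarith [norm_sq_le_sum_norm_sq (fun r => X (.inl r) (.inl j)) i, sum_norm_sq_col hX j]
    · linarith
  · rcases i with i | ⟨⟩
    · linarith [norm_sq_le_sum_norm_sq (fun r => X (.inl r) (.inr ())) i,
        sum_norm_sq_col_last hX]
    · rfl

theorem eq_fromBlocks_of_norm_inr_inr_le_one (hX : X ∈ Sp n)
    (h1 : ‖X (.inr ()) (.inr ())‖ ≤ 1) :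
    X = fromBlocks X.toBlocks₁₁ 0 0 (of fun _ _ => X (.inr ()) (.inr ())) := by
  have h0 : ‖X (.inr ()) (.inr ())‖ ^ 2 - 1 ≤ 0 := by
    nlinarith [norm_nonneg (X (.inr ()) (.inr ()))]
  have hzero : ∀ f : Fin n → ℍ[ℝ], ∑ r, ‖f r‖ ^ 2 = ‖X (.inr ()) (.inr ())‖ ^ 2 - 1 →
      ∀ r, f r = 0 := by
    intro f hf r
    have := (norm_sq_le_sum_norm_sq f r).trans (hf.trans_le h0)
    simpa using this
  conv_lhs => rw [← fromBlocks_toBlocks X]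
  congr 1
  · exact Matrix.ext fun i ⟨⟩ => hzero _ (sum_norm_sq_col_last hX) i
  · exact Matrix.ext fun ⟨⟩ j => hzero _ (sum_norm_sq_row_last hX) j

theorem exists_tendsto_subseq {Y : ℕ → 𝕄 n} (hY : ∀ k, Y k ∈ Sp n) {R : ℝ}
    (hR : ∀ k, ‖Y k (.inr ()) (.inr ())‖ ≤ R) :
    ∃ L ∈ Sp n, ∃ φ : ℕ → ℕ, StrictMono φ ∧ Tendsto (Y ∘ φ) atTop (nhds L) := by
  have : FirstCountableTopology (𝕄 n) :=
    inferInstanceAs (FirstCountableTopology (Fin n ⊕ Unit → Fin n ⊕ Unit → ℍ[ℝ]))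
  have hK : IsCompact
      (Set.univ.pi fun _ => Set.univ.pi fun _ => Metric.closedBall 0 R : Set (𝕄 n)) :=
    isCompact_univ_pi fun _ => isCompact_univ_pi fun _ => isCompact_closedBall _ _
  obtain ⟨L, -, φ, hφ, hlim⟩ := hK.tendsto_subseq fun k =>
    Set.mem_univ_pi.mpr fun i => Set.mem_univ_pi.mpr fun j =>
      mem_closedBall_zero_iff.mpr ((norm_apply_le (hY k) i j).trans (hR k))
  exact ⟨L, (isClosed n).mem_of_tendsto hlim (Eventually.of_forall fun t => hY (φ t)), φ, hφ, hlim⟩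

theorem one_lt_norm_sq_inr_inr (hX : X ∈ Sp n) {i : Fin n} (hi : X (.inr ()) (.inl i) ≠ 0) :
    1 < ‖X (.inr ()) (.inr ())‖ ^ 2 := by
  have := norm_sq_le_sum_norm_sq (fun r => X (.inr ()) (.inl r)) i
  have : 0 < ‖X (.inr ()) (.inl i)‖ ^ 2 := by positivity
  linarith [sum_norm_sq_row_last hX]

theorem norm_sq_inr_inr_mul_diagonal_mul_jAdjoint_le (hX : X ∈ Sp n)
    {d : Fin n ⊕ Unit → ℍ[ℝ]} (hd : ∀ i, ‖d i‖ = 1) {δ : ℝ}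
    (hδ : ∀ i u w, u ≠ 0 → w ≠ 0 → ‖u * d (.inl i) * u⁻¹ - w * d (.inr ()) * w⁻¹‖ ^ 2 ≤ δ)
    (hδ0 : 0 ≤ δ) :
    ‖(X * diagonal d * (Jm n * Xᴴ * Jm n)) (.inr ()) (.inr ())‖ ^ 2 - 1 ≤
      (‖X (.inr ()) (.inr ())‖ ^ 2 - 1) * ‖X (.inr ()) (.inr ())‖ ^ 2 * δ := by
  rw [mul_diagonal_mul_jAdjoint_inr_inr]
  linarith [norm_sq_mul_mul_star_sub_sum_le _ _ _ _ (hd _) (fun _ => hd _)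
    (sum_norm_sq_row_last hX) hδ hδ0]

end Sp

theorem jAdjoint_mem_genGrp {g h X : 𝕄 n} (hX : X ∈ genGrp n g h) :
    Jm n * Xᴴ * Jm n ∈ genGrp n g h := by
  induction hX using Submonoid.closure_induction with
  | mem x hx =>
    rcases hx with rfl | rfl | rfl | rfl
    · exact Submonoid.subset_closure (by simp)
    · exact Submonoid.subset_closure (by simp)
    · rw [jAdjoint_jAdjoint]; exact Submonoid.subset_closure (by simp)
    · rw [jAdjoint_jAdjoint]; exact Submonoid.subset_closure (by simp)
  | one => simp [one_mem]
  | mul x y _ _ hx hy => rw [jAdjoint_mul]; exact mul_mem hy hx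

theorem not_discreteTopology_genGrp_of_tendsto {g h L : 𝕄 n} {Y : ℕ → 𝕄 n}
    (hY : ∀ k, Y k ∈ genGrp n g h) (hYSp : ∀ k, Y k ∈ Sp n) (hinj : Function.Injective Y)
    (hL : L ∈ Sp n) (hlim : Tendsto Y atTop (nhds L)) : ¬ DiscreteTopology (genGrp n g h) := by
  refine not_discreteTopology_of_tendsto (l := atTop) (one_mem _)
    (f := fun t => Y (t + 1) * (Jm n * (Y t)ᴴ * Jm n))
    (fun _ => mul_mem (hY _) (jAdjoint_mem_genGrp (hY _))) (fun t ht => ?_) ?_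
  · have := hinj (left_inv_eq_right_inv ht (Sp.jAdjoint_mul_self (hYSp t)))
    omega
  · simpa [Sp.mul_jAdjoint hL] using
      (hlim.comp (tendsto_add_atTop_nat 1)).mul ((continuous_jAdjoint.tendsto L).comp hlim)

theorem stmt11 (n : ℕ) (h : Matrix (Fin n ⊕ Unit) (Fin n ⊕ Unit) ℍ[ℝ]) (hSp : h ∈ Sp n)
    (lam : Fin n ⊕ Unit → ℍ[ℝ]) (hlam : ∀ i, ‖lam i‖ = 1)
    (δ : ℝ)
    (hδ : δ = sSup {r : ℝ | ∃ i : Fin n, ∃ u w : ℍ[ℝ], u ≠ 0 ∧ w ≠ 0 ∧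
        r = ‖u * lam (Sum.inl i) * u⁻¹ - w * lam (Sum.inr ()) * w⁻¹‖ ^ 2})
    (hs : ℕ → Matrix (Fin n ⊕ Unit) (Fin n ⊕ Unit) ℍ[ℝ])
    (hs0 : hs 0 = h)
    (hsrec : ∀ k, hs (k + 1) = hs k * Matrix.diagonal lam * (Jm n * (hs k)ᴴ * Jm n))
    (hsmall : ‖h (Sum.inr ()) (Sum.inr ())‖ ^ 2 * δ < 1)
    (hβ : ∀ k, ∃ i : Fin n, hs k (Sum.inr ()) (Sum.inl i) ≠ 0) :
    (∀ k, ‖hs (k + 1) (Sum.inr ()) (Sum.inr ())‖ < ‖hs k (Sum.inr ()) (Sum.inr ())‖)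
    ∧ Function.Injective hs
    ∧ (∃ ks : ℕ → ℕ, StrictMono ks ∧
        ∃ (Ainf : Matrix (Fin n) (Fin n) ℍ[ℝ]) (ainf : ℍ[ℝ]),
          Matrix.fromBlocks Ainf 0 0 (Matrix.of fun _ _ => ainf) ∈ Sp n ∧
          Tendsto (fun t => hs (ks t)) atTop
            (nhds (Matrix.fromBlocks Ainf 0 0 (Matrix.of fun _ _ => ainf))))
    ∧ ¬ DiscreteTopology (genGrp n (Matrix.diagonal lam) h) := by
  have hδ0 : 0 ≤ δ := hδ ▸ Real.sSup_nonneg (by rintro _ ⟨_, _, _, _, _, rfl⟩; positivity)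
  have hconj : ∀ i u w, u ≠ 0 → w ≠ 0 →
      ‖u * lam (.inl i) * u⁻¹ - w * lam (.inr ()) * w⁻¹‖ ^ 2 ≤ δ := fun i u w hu hw =>
    hδ ▸ norm_conj_sub_conj_sq_le_sSup (fun _ => hlam _) (hlam _) i hu hw
  have hSpk : ∀ k, hs k ∈ Sp n := Nat.rec (hs0 ▸ hSp) fun k ih =>
    hsrec k ▸ Sp.mul_mem (Sp.mul_mem ih (Sp.diagonal_mem hlam)) (Sp.jAdjoint_mem ih)
  have hmem : ∀ k, hs k ∈ genGrp n (diagonal lam) h := Nat.rec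
    (hs0 ▸ Submonoid.subset_closure (by simp)) fun k ih => hsrec k ▸
      mul_mem (mul_mem ih (Submonoid.subset_closure (by simp))) (jAdjoint_mem_genGrp ih)
  set x : ℕ → ℝ := fun k => ‖hs k (.inr ()) (.inr ())‖ ^ 2 with hx
  have hone : ∀ k, 1 ≤ x k := fun k => Sp.one_le_norm_sq_inr_inr (hSpk k)
  have hrec : ∀ k, x (k + 1) - 1 ≤ (x k - 1) * x k * δ := fun k => by
    simpa only [hx, hsrec k] using
      Sp.norm_sq_inr_inr_mul_diagonal_mul_jAdjoint_le (hSpk k) hlam hconj hδ0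
  have hx0 : x 0 * δ < 1 := by simpa only [hx, hs0] using hsmall
  have hdec : ∀ k, ‖hs (k + 1) (.inr ()) (.inr ())‖ < ‖hs k (.inr ()) (.inr ())‖ := fun k =>
    (pow_lt_pow_iff_left₀ (norm_nonneg _) (norm_nonneg _) two_ne_zero).mp
      (succ_lt_of_sub_one_le hrec hone hδ0 hx0
        (Sp.one_lt_norm_sq_inr_inr (hSpk k) (hβ k).choose_spec))
  have hanti : StrictAnti fun k => ‖hs k (.inr ()) (.inr ())‖ := strictAnti_nat_of_succ_lt hdec
  have hinj : Function.Injective hs := fun j k hjk => hanti.injective (by simp only [hjk])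
  obtain ⟨L, hL, φ, hφ, hlim⟩ := Sp.exists_tendsto_subseq hSpk (R := ‖h (.inr ()) (.inr ())‖)
    fun k => hs0 ▸ hanti.antitone (Nat.zero_le k)
  have hLc : ‖L (.inr ()) (.inr ())‖ ≤ 1 := by
    have hcorner : Tendsto (x ∘ φ) atTop (nhds (‖L (.inr ()) (.inr ())‖ ^ 2)) :=
      ((continuous_id.matrix_elem _ _).norm.pow 2).tendsto L |>.comp hlim
    have hone_lim := (tendsto_one_of_sub_one_le hrec hone hδ0 hx0).comp hφ.tendsto_atTop
    nlinarith [tendsto_nhds_unique hcorner hone_lim, norm_nonneg (L (.inr ()) (.inr ()))]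
  have hblock := Sp.eq_fromBlocks_of_norm_inr_inr_le_one hL hLc
  exact ⟨hdec, hinj, ⟨φ, hφ, _, _, hblock ▸ hL, hblock ▸ hlim⟩,
    not_discreteTopology_genGrp_of_tendsto (fun _ => hmem _) (fun _ => hSpk _)
      (hinj.comp hφ.injective) hL hlim⟩
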